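/- The k-th transvectant of two SL₂-covariant forms is again covariant: if g and h are homogeneous of degrees m and n in x₁, x₂ with coefficients depending polynomially on parameters, and both transform covariantly under a substitution x ↦ γ·x with γ ∈ SL₂, then (g,h)_k transforms covariantly of degree m + n − 2k under the same substitution. -/

import Mathlib

open MvPolynomial Finset Matrix

noncomputable section

/-- `k`-fold partial derivative in the variable `i`. -/
def pd (i : Fin 2) (k : ℕ) (p : MvPolynomial (Fin 2) ℂ) : MvPolynomial (Fin 2) ℂ :=
  (fun q => pderiv i q)^[k] p

/-- The `k`-th transvectant of binary forms `g` of degree `m` and `h` of degree `n`. -/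
def transvectant (m n k : ℕ) (g h : MvPolynomial (Fin 2) ℂ) : MvPolynomial (Fin 2) ℂ :=
  C ((((m - k).factorial * (n - k).factorial : ℚ) / (m.factorial * n.factorial : ℚ) : ℚ) : ℂ) *
    ∑ j ∈ range (k + 1),
      C ((-1 : ℂ) ^ j * (k.choose j : ℂ)) * (pd 0 (k - j) (pd 1 j g)) *
        (pd 0 j (pd 1 (k - j) h))

/-- The action of `γ ∈ SL₂(ℂ)` on binary forms: `(p ∘ γ)(x) = p(γ·x)`. -/
def actγ (γ : Matrix.SpecialLinearGroup (Fin 2) ℂ) (p : MvPolynomial (Fin 2) ℂ) :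
    MvPolynomial (Fin 2) ℂ :=
  aeval (fun i : Fin 2 => ∑ j : Fin 2, C (γ.1 i j) * X j) p

lemma pderiv_aeval_chain {σ τ : Type*} [Fintype σ] [DecidableEq σ] [DecidableEq τ]
    (f : σ → MvPolynomial τ ℂ) (i : τ) (p : MvPolynomial σ ℂ) :
    pderiv i (aeval f p) = ∑ j : σ, aeval f (pderiv j p) * pderiv i (f j) := by
  induction p using MvPolynomial.induction_on with
  | C a => simp
  | add p q hp hq =>
      rw [_root_.map_add, _root_.map_add, hp, hq, ← Finset.sum_add_distrib]
      refine Finset.sum_congr rfl fun j _ => ?_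
      simp [add_mul]
  | mul_X p n hp =>
      simp only [_root_.map_mul, aeval_X, pderiv_mul, hp, _root_.map_add, add_mul,
        Finset.sum_add_distrib, pderiv_X, Pi.single_apply, apply_ite (aeval f),
        _root_.map_one, _root_.map_zero, mul_ite, mul_one, mul_zero, ite_mul, zero_mul,
        Finset.sum_ite_eq, Finset.mem_univ, if_true, ← Finset.sum_mul]
      rw [Finset.sum_mul]
      rw [add_left_inj]
      refine Finset.sum_congr rfl fun j _ => ?_
      ring

lemma pderiv_commute {σ : Type*} [DecidableEq σ] (i j : σ) (p : MvPolynomial σ ℂ) :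
    pderiv i (pderiv j p) = pderiv j (pderiv i p) := by
  induction p using MvPolynomial.induction_on with
  | C a => simp
  | add p q hp hq => simp [hp, hq]
  | mul_X p n hp =>
      simp only [pderiv_mul, pderiv_X, _root_.map_add, hp]
      have h1 : ∀ a : σ, pderiv a ((Pi.single i 1 : σ → MvPolynomial σ ℂ) n) = 0 := by
        intro a; rcases eq_or_ne i n with h | h <;> simp [Pi.single_apply, h]
      have h2 : ∀ a : σ, pderiv a ((Pi.single j 1 : σ → MvPolynomial σ ℂ) n) = 0 := by
        intro a; rcases eq_or_ne j n with h | h <;> simp [Pi.single_apply, h]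
      rw [h1, h2]
      ring

/-- Substitution on the doubled variables. -/
def Fγ (γ : Matrix.SpecialLinearGroup (Fin 2) ℂ) :
    Fin 2 ⊕ Fin 2 → MvPolynomial (Fin 2 ⊕ Fin 2) ℂ :=
  Sum.elim (fun i => ∑ j : Fin 2, C (γ.1 i j) * X (Sum.inl j))
           (fun i => ∑ j : Fin 2, C (γ.1 i j) * X (Sum.inr j))

lemma pderiv_Fγ_inl_inl (γ : Matrix.SpecialLinearGroup (Fin 2) ℂ) (i a : Fin 2) :
    pderiv (Sum.inl i) (Fγ γ (Sum.inl a)) = C (γ.1 a i) := by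
  simp only [Fγ, Sum.elim_inl, _root_.map_sum, pderiv_C_mul, pderiv_X]
  rw [Finset.sum_eq_single i]
  · simp
  · intro b _ hb
    simp [Pi.single_apply, hb]
  · simp

lemma pderiv_Fγ_inl_inr (γ : Matrix.SpecialLinearGroup (Fin 2) ℂ) (i a : Fin 2) :
    pderiv (Sum.inl i) (Fγ γ (Sum.inr a)) = 0 := by
  simp [Fγ, _root_.map_sum, pderiv_C_mul, pderiv_X, Pi.single_apply]

lemma pderiv_Fγ_inr_inl (γ : Matrix.SpecialLinearGroup (Fin 2) ℂ) (i a : Fin 2) :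
    pderiv (Sum.inr i) (Fγ γ (Sum.inl a)) = 0 := by
  simp [Fγ, _root_.map_sum, pderiv_C_mul, pderiv_X, Pi.single_apply]

lemma pderiv_Fγ_inr_inr (γ : Matrix.SpecialLinearGroup (Fin 2) ℂ) (i a : Fin 2) :
    pderiv (Sum.inr i) (Fγ γ (Sum.inr a)) = C (γ.1 a i) := by
  simp only [Fγ, Sum.elim_inr, _root_.map_sum, pderiv_C_mul, pderiv_X]
  rw [Finset.sum_eq_single i]
  · simp
  · intro b _ hb
    simp [Pi.single_apply, hb]
  · simp

lemma chain_inl (γ : Matrix.SpecialLinearGroup (Fin 2) ℂ) (i : Fin 2)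
    (P : MvPolynomial (Fin 2 ⊕ Fin 2) ℂ) :
    pderiv (Sum.inl i) (aeval (Fγ γ) P) =
      ∑ a : Fin 2, C (γ.1 a i) * aeval (Fγ γ) (pderiv (Sum.inl a) P) := by
  rw [pderiv_aeval_chain, Fintype.sum_sum_type]
  simp only [pderiv_Fγ_inl_inl, pderiv_Fγ_inl_inr, mul_zero, Finset.sum_const_zero, add_zero]
  exact Finset.sum_congr rfl fun a _ => mul_comm _ _

lemma chain_inr (γ : Matrix.SpecialLinearGroup (Fin 2) ℂ) (i : Fin 2)
    (P : MvPolynomial (Fin 2 ⊕ Fin 2) ℂ) :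
    pderiv (Sum.inr i) (aeval (Fγ γ) P) =
      ∑ a : Fin 2, C (γ.1 a i) * aeval (Fγ γ) (pderiv (Sum.inr a) P) := by
  rw [pderiv_aeval_chain, Fintype.sum_sum_type]
  simp only [pderiv_Fγ_inr_inl, pderiv_Fγ_inr_inr, mul_zero, Finset.sum_const_zero, zero_add]
  exact Finset.sum_congr rfl fun a _ => mul_comm _ _

/-- The Cayley Omega process. -/
def Om (P : MvPolynomial (Fin 2 ⊕ Fin 2) ℂ) : MvPolynomial (Fin 2 ⊕ Fin 2) ℂ :=
  pderiv (Sum.inl 0) (pderiv (Sum.inr 1) P) - pderiv (Sum.inl 1) (pderiv (Sum.inr 0) P)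

lemma Om_aeval (γ : Matrix.SpecialLinearGroup (Fin 2) ℂ)
    (P : MvPolynomial (Fin 2 ⊕ Fin 2) ℂ) :
    Om (aeval (Fγ γ) P) = aeval (Fγ γ) (Om P) := by
  have hdet : γ.1 0 0 * γ.1 1 1 - γ.1 0 1 * γ.1 1 0 = 1 := by
    have := γ.2
    rwa [Matrix.det_fin_two] at this
  have hC : (C (γ.1 0 0) * C (γ.1 1 1) - C (γ.1 0 1) * C (γ.1 1 0) :
      MvPolynomial (Fin 2 ⊕ Fin 2) ℂ) = 1 := by
    rw [← C_mul, ← C_mul, ← C_sub, hdet, C_1]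
  unfold Om
  rw [chain_inr, chain_inr]
  simp only [_root_.map_sum, _root_.map_add, pderiv_C_mul, chain_inl, Finset.mul_sum, Fin.sum_univ_two,
    _root_.map_sub]
  linear_combination (aeval (Fγ γ) (pderiv (Sum.inl 0) (pderiv (Sum.inr 1) P))
    - aeval (Fγ γ) (pderiv (Sum.inl 1) (pderiv (Sum.inr 0) P))) * hC

lemma pd_zero (i : Fin 2) (p : MvPolynomial (Fin 2) ℂ) : pd i 0 p = p := rfl

lemma pd_succ (i : Fin 2) (k : ℕ) (p : MvPolynomial (Fin 2) ℂ) :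
    pd i (k + 1) p = pderiv i (pd i k p) := Function.iterate_succ_apply' _ _ _

lemma pderiv_pd (i i' : Fin 2) (k : ℕ) (p : MvPolynomial (Fin 2) ℂ) :
    pderiv i (pd i' k p) = pd i' k (pderiv i p) := by
  induction k with
  | zero => rfl
  | succ k ih => rw [pd_succ, pd_succ, ← ih, pderiv_commute]

lemma pderiv_inr_rename_inl (i : Fin 2) (A : MvPolynomial (Fin 2) ℂ) :
    pderiv (Sum.inr i) (rename (Sum.inl : Fin 2 → Fin 2 ⊕ Fin 2) A) = 0 := by
  induction A using MvPolynomial.induction_on with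
  | C a => simp
  | add p q hp hq => simp [hp, hq]
  | mul_X p n hp => simp [pderiv_mul, hp, Pi.single_apply]

lemma pderiv_inl_rename_inr (i : Fin 2) (A : MvPolynomial (Fin 2) ℂ) :
    pderiv (Sum.inl i) (rename (Sum.inr : Fin 2 → Fin 2 ⊕ Fin 2) A) = 0 := by
  induction A using MvPolynomial.induction_on with
  | C a => simp
  | add p q hp hq => simp [hp, hq]
  | mul_X p n hp => simp [pderiv_mul, hp, Pi.single_apply]

lemma Om_tensor (A B : MvPolynomial (Fin 2) ℂ) :
    Om (rename Sum.inl A * rename Sum.inr B) =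
      rename Sum.inl (pderiv 0 A) * rename Sum.inr (pderiv 1 B)
        - rename Sum.inl (pderiv 1 A) * rename Sum.inr (pderiv 0 B) := by
  unfold Om
  simp only [pderiv_mul, pderiv_inr_rename_inl, pderiv_inl_rename_inr, zero_mul, mul_zero,
    zero_add, add_zero, _root_.map_add,
    pderiv_rename (Sum.inl_injective (α := Fin 2) (β := Fin 2)),
    pderiv_rename (Sum.inr_injective (α := Fin 2) (β := Fin 2))]

lemma Om_sum {ι : Type*} (s : Finset ι) (f : ι → MvPolynomial (Fin 2 ⊕ Fin 2) ℂ) :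
    Om (∑ i ∈ s, f i) = ∑ i ∈ s, Om (f i) := by
  unfold Om
  simp [Finset.sum_sub_distrib]

lemma Om_C_mul (a : ℂ) (P : MvPolynomial (Fin 2 ⊕ Fin 2) ℂ) :
    Om (C a * P) = C a * Om P := by
  unfold Om
  simp [pderiv_C_mul, mul_sub]

lemma Om_iterate (g h : MvPolynomial (Fin 2) ℂ) (k : ℕ) :
    Om^[k] (rename Sum.inl g * rename Sum.inr h) =
      ∑ j ∈ range (k + 1), C ((-1 : ℂ) ^ j * (k.choose j : ℂ)) *
        (rename Sum.inl (pd 0 (k - j) (pd 1 j g)) *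
          rename Sum.inr (pd 0 j (pd 1 (k - j) h))) := by
  induction k with
  | zero => simp [pd]
  | succ k ih =>
    set T : ℕ → MvPolynomial (Fin 2 ⊕ Fin 2) ℂ := fun j =>
      rename Sum.inl (pd 0 (k + 1 - j) (pd 1 j g)) *
        rename Sum.inr (pd 0 j (pd 1 (k + 1 - j) h)) with hT
    rw [Function.iterate_succ_apply', ih, Om_sum]
    have hstep : ∀ j ∈ range (k + 1),
        Om (C ((-1 : ℂ) ^ j * (k.choose j : ℂ)) *
          (rename Sum.inl (pd 0 (k - j) (pd 1 j g)) *
            rename Sum.inr (pd 0 j (pd 1 (k - j) h)))) =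
        C ((-1 : ℂ) ^ j * (k.choose j : ℂ)) * T j
          - C ((-1 : ℂ) ^ j * (k.choose j : ℂ)) * T (j + 1) := by
      intro j hj
      have hjk : j ≤ k := Nat.lt_succ_iff.mp (Finset.mem_range.mp hj)
      have e1 : k + 1 - j = (k - j) + 1 := by omega
      have e2 : k + 1 - (j + 1) = k - j := by omega
      rw [Om_C_mul, Om_tensor, hT]
      rw [← mul_sub]
      congr 1
      simp only [e1, e2, pd_succ, pderiv_pd]
    rw [Finset.sum_congr rfl hstep, Finset.sum_sub_distrib]
    have h1 : ∑ j ∈ range (k + 1), C ((-1 : ℂ) ^ j * (k.choose j : ℂ)) * T j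
        = ∑ j ∈ range (k + 2), C ((-1 : ℂ) ^ j * (k.choose j : ℂ)) * T j := by
      rw [Finset.sum_range_succ (n := k + 1)]
      simp [Nat.choose_succ_self]
    set d : ℕ → ℂ := fun j => Nat.casesOn j 0 (fun s => (-1 : ℂ) ^ s * (k.choose s : ℂ))
      with hd
    have h2 : ∑ j ∈ range (k + 1), C ((-1 : ℂ) ^ j * (k.choose j : ℂ)) * T (j + 1)
        = ∑ j ∈ range (k + 2), C (d j) * T j := by
      rw [Finset.sum_range_succ' (fun j => C (d j) * T j) (k + 1)]
      simp [hd]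
    rw [h1, h2, ← Finset.sum_sub_distrib]
    refine Finset.sum_congr rfl fun j _ => ?_
    rw [← sub_mul, ← C_sub]
    congr 2
    cases j with
    | zero => simp [hd]
    | succ s =>
      simp only [hd]
      push_cast [Nat.choose_succ_succ]
      ring

lemma res_rename_inl (A : MvPolynomial (Fin 2) ℂ) :
    aeval (Sum.elim X X) (rename (Sum.inl : Fin 2 → Fin 2 ⊕ Fin 2) A) = A := by
  rw [aeval_rename]
  simp [Sum.elim_comp_inl]

lemma res_rename_inr (A : MvPolynomial (Fin 2) ℂ) :
    aeval (Sum.elim X X) (rename (Sum.inr : Fin 2 → Fin 2 ⊕ Fin 2) A) = A := by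
  rw [aeval_rename]
  simp [Sum.elim_comp_inr]

lemma res_aeval (γ : Matrix.SpecialLinearGroup (Fin 2) ℂ)
    (P : MvPolynomial (Fin 2 ⊕ Fin 2) ℂ) :
    aeval (Sum.elim X X) (aeval (Fγ γ) P) = actγ γ (aeval (Sum.elim X X) P) := by
  have : ((aeval (Sum.elim X X)).comp (aeval (Fγ γ)) :
      MvPolynomial (Fin 2 ⊕ Fin 2) ℂ →ₐ[ℂ] MvPolynomial (Fin 2) ℂ) =
      (aeval (fun i : Fin 2 => ∑ j : Fin 2, C (γ.1 i j) * X j)).comp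
        (aeval (Sum.elim X X)) := by
    apply MvPolynomial.algHom_ext
    intro v
    rcases v with i | i <;> simp [Fγ]
  exact congrArg (fun φ => φ P) this

lemma rename_actγ (γ : Matrix.SpecialLinearGroup (Fin 2) ℂ) (g : MvPolynomial (Fin 2) ℂ) :
    rename (Sum.inl : Fin 2 → Fin 2 ⊕ Fin 2) (actγ γ g) = aeval (Fγ γ) (rename Sum.inl g) := by
  have : ((rename (Sum.inl : Fin 2 → Fin 2 ⊕ Fin 2)).comp
      (aeval (fun i : Fin 2 => ∑ j : Fin 2, C (γ.1 i j) * X j)) :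
      MvPolynomial (Fin 2) ℂ →ₐ[ℂ] MvPolynomial (Fin 2 ⊕ Fin 2) ℂ) =
      (aeval (Fγ γ)).comp (rename Sum.inl) := by
    apply MvPolynomial.algHom_ext
    intro i
    simp [Fγ]
  exact congrArg (fun φ => φ g) this

lemma rename_actγ' (γ : Matrix.SpecialLinearGroup (Fin 2) ℂ) (g : MvPolynomial (Fin 2) ℂ) :
    rename (Sum.inr : Fin 2 → Fin 2 ⊕ Fin 2) (actγ γ g) = aeval (Fγ γ) (rename Sum.inr g) := by
  have : ((rename (Sum.inr : Fin 2 → Fin 2 ⊕ Fin 2)).comp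
      (aeval (fun i : Fin 2 => ∑ j : Fin 2, C (γ.1 i j) * X j)) :
      MvPolynomial (Fin 2) ℂ →ₐ[ℂ] MvPolynomial (Fin 2 ⊕ Fin 2) ℂ) =
      (aeval (Fγ γ)).comp (rename Sum.inr) := by
    apply MvPolynomial.algHom_ext
    intro i
    simp [Fγ]
  exact congrArg (fun φ => φ g) this

lemma Om_iterate_aeval (γ : Matrix.SpecialLinearGroup (Fin 2) ℂ) (k : ℕ)
    (P : MvPolynomial (Fin 2 ⊕ Fin 2) ℂ) :
    Om^[k] (aeval (Fγ γ) P) = aeval (Fγ γ) (Om^[k] P) := by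
  induction k with
  | zero => rfl
  | succ k ih => rw [Function.iterate_succ_apply', Function.iterate_succ_apply', ih, Om_aeval]

lemma transvectant_eq (m n k : ℕ) (g h : MvPolynomial (Fin 2) ℂ) :
    transvectant m n k g h =
      C ((((m - k).factorial * (n - k).factorial : ℚ) / (m.factorial * n.factorial : ℚ) : ℚ) : ℂ) *
        aeval (Sum.elim X X) (Om^[k] (rename Sum.inl g * rename Sum.inr h)) := by
  rw [Om_iterate, _root_.map_sum]
  unfold transvectant
  congr 1
  refine Finset.sum_congr rfl fun j _ => ?_
  simp only [_root_.map_mul, res_rename_inl, res_rename_inr, aeval_C,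
    MvPolynomial.algebraMap_eq]
  ring

lemma isHomog_pderiv {σ : Type*} [DecidableEq σ] {p : MvPolynomial σ ℂ} {n : ℕ}
    (hp : p.IsHomogeneous n) (i : σ) : (pderiv i p).IsHomogeneous (n - 1) := by
  rw [← p.support_sum_monomial_coeff, _root_.map_sum]
  apply IsHomogeneous.sum
  intro d hd
  rw [pderiv_monomial]
  by_cases h : d i = 0
  · rw [h]; simpa using isHomogeneous_zero σ ℂ (n-1)
  · apply isHomogeneous_monomial
    have hdn : (Finsupp.weight 1) d = n := hp (mem_support_iff.mp hd)
    have hsum : (d - Finsupp.single i 1) + Finsupp.single i 1 = d := by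
      ext a
      simp only [Finsupp.coe_add, Finsupp.coe_tsub, Pi.add_apply, Pi.sub_apply,
        Finsupp.single_apply]
      by_cases ha : i = a
      · subst ha; simp; omega
      · simp [ha]
    have hw := congrArg (Finsupp.weight (1 : σ → ℕ)) hsum
    rw [_root_.map_add] at hw
    have hs1 : (Finsupp.weight (1 : σ → ℕ)) (Finsupp.single i 1) = 1 := by
      simp [Finsupp.weight_apply, Finsupp.sum_single_index]
    rw [Finsupp.degree_eq_weight_one]
    exact (by omega : (Finsupp.weight (1 : σ → ℕ)) (d - Finsupp.single i 1) = n - 1)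

lemma pd_homog {p : MvPolynomial (Fin 2) ℂ} {d : ℕ} (hp : p.IsHomogeneous d)
    (i : Fin 2) (t : ℕ) : (pd i t p).IsHomogeneous (d - t) := by
  induction t with
  | zero => simpa [pd_zero]
  | succ t ih =>
    rw [pd_succ, ← Nat.sub_sub]
    exact isHomog_pderiv ih i

/-- Covariance of the transvectant: if `g` and `h` are homogeneous of degrees `m` and `n`,
then for any `γ ∈ SL₂(ℂ)` one has `(g∘γ, h∘γ)_k = (g,h)_k ∘ γ`; in particular `(g,h)_k`
is homogeneous of degree `m + n − 2k`. -/
theorem transvectant_covariant (m n k : ℕ) (hk : k ≤ min m n)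
    (g h : MvPolynomial (Fin 2) ℂ)
    (hg : g.IsHomogeneous m) (hh : h.IsHomogeneous n)
    (γ : Matrix.SpecialLinearGroup (Fin 2) ℂ) :
    transvectant m n k (actγ γ g) (actγ γ h) = actγ γ (transvectant m n k g h) ∧
      (transvectant m n k g h).IsHomogeneous (m + n - 2 * k) := by
  have hkm : k ≤ m := le_trans hk (min_le_left _ _)
  have hkn : k ≤ n := le_trans hk (min_le_right _ _)
  constructor
  · rw [transvectant_eq, transvectant_eq, rename_actγ, rename_actγ',
      ← _root_.map_mul (aeval (Fγ γ)), Om_iterate_aeval, res_aeval]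
    simp [actγ, _root_.map_mul, aeval_C, MvPolynomial.algebraMap_eq]
  · unfold transvectant
    have hsum : MvPolynomial.IsHomogeneous (∑ j ∈ range (k + 1),
        C ((-1 : ℂ) ^ j * (k.choose j : ℂ)) * (pd 0 (k - j) (pd 1 j g)) *
          (pd 0 j (pd 1 (k - j) h))) (m + n - 2 * k) := by
      apply IsHomogeneous.sum
      intro j hj
      have hjk : j ≤ k := Nat.lt_succ_iff.mp (Finset.mem_range.mp hj)
      have h1 : (pd 0 (k - j) (pd 1 j g)).IsHomogeneous (m - k) := by
        have := pd_homog (pd_homog hg 1 j) 0 (k - j)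
        rwa [Nat.sub_sub, Nat.add_sub_cancel' hjk] at this
      have h2 : (pd 0 j (pd 1 (k - j) h)).IsHomogeneous (n - k) := by
        have := pd_homog (pd_homog hh 1 (k - j)) 0 j
        rwa [Nat.sub_sub, Nat.sub_add_cancel hjk] at this
      have := ((isHomogeneous_C (Fin 2) ((-1 : ℂ) ^ j * (k.choose j : ℂ))).mul h1).mul h2
      have hdeg : 0 + (m - k) + (n - k) = m + n - 2 * k := by omega
      rwa [hdeg] at this
    have := (isHomogeneous_C (Fin 2)
      ((((m - k).factorial * (n - k).factorial : ℚ) / (m.factorial * n.factorial : ℚ) : ℚ) : ℂ)).mul hsum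
    rwa [zero_add] at this

end
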